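/- Let A, B, C be n×n Hermitian positive definite matrices such that e_k(λ(AC^{−1})) ≤ e_k(λ(BC^{−1})) for k = 1,…,n−1 and det(AC^{−1}) = det(BC^{−1}). Then δ_S(A,C) ≤ δ_S(B,C), where the S-divergence is δ_S(X,Y) = log det((X+Y)/2) − (1/2) log det(XY). -/

import Mathlib

/-! With `S = C^{-1/2}`, congruence gives `det (X + C) = det C · det (1 + S X S) = det C · ∏ (1 + μᵢ)
= det C · ∑ₖ eₖ(μ)`, where `μ` are the eigenvalues of `S X S` (those of `X C⁻¹`). Since
`det (A C⁻¹) = det (B C⁻¹)`, the coefficients `e₀ = 1` and `eₙ = ∏ μᵢ` agree for `A` and `B`, so the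
hypotheses on `e₁, …, e_{n-1}` give `det ((A + C)/2) ≤ det ((B + C)/2)`, while `det (A C) = det (B C)`. -/

open Finset Real Matrix
open scoped ComplexOrder

noncomputable def Matrix.PosSemidef.sqrt {n 𝕜 : Type*} [Fintype n] [RCLike 𝕜] [DecidableEq n]
    {A : Matrix n n 𝕜} (hA : A.PosSemidef) : Matrix n n 𝕜 :=
  hA.1.eigenvectorUnitary.1 * diagonal ((↑) ∘ (√·) ∘ hA.1.eigenvalues) *
  (star hA.1.eigenvectorUnitary : Matrix n n 𝕜)

noncomputable def esymm (n k : ℕ) (x : Fin n → ℝ) : ℝ :=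
  ∑ s ∈ Finset.powersetCard k (Finset.univ : Finset (Fin n)), ∏ i ∈ s, x i

/-- The S-divergence `δ_S(X,Y) = log det((X+Y)/2) − (1/2) log det(XY)` for positive definite
matrices; the determinants involved are positive reals, so we take real parts. -/
noncomputable def deltaS (n : ℕ) (X Y : Matrix (Fin n) (Fin n) ℂ) : ℝ :=
  Real.log (((1 / 2 : ℂ) • (X + Y)).det).re - (1 / 2) * Real.log ((X * Y).det).re

namespace Matrix

variable {m 𝕜 : Type*} [Fintype m] [DecidableEq m] [RCLike 𝕜]

lemma PosSemidef.posSemidef_sqrt {A : Matrix m m 𝕜} (hA : A.PosSemidef) : hA.sqrt.PosSemidef := by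
  have hD : (diagonal ((↑) ∘ (√·) ∘ hA.1.eigenvalues) : Matrix m m 𝕜).PosSemidef :=
    PosSemidef.diagonal fun i => RCLike.ofReal_nonneg.mpr (Real.sqrt_nonneg _)
  rw [PosSemidef.sqrt, star_eq_conjTranspose]
  exact hD.mul_mul_conjTranspose_same _

lemma PosSemidef.sqrt_mul_self {A : Matrix m m 𝕜} (hA : A.PosSemidef) : hA.sqrt * hA.sqrt = A := by
  set U : Matrix m m 𝕜 := hA.1.eigenvectorUnitary.1
  set D : Matrix m m 𝕜 := diagonal ((↑) ∘ (√·) ∘ hA.1.eigenvalues)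
  have hUU : star U * U = 1 := (mem_unitaryGroup_iff').mp hA.1.eigenvectorUnitary.2
  have hDD : D * D = diagonal (RCLike.ofReal ∘ hA.1.eigenvalues) := by
    rw [diagonal_mul_diagonal]
    congr 1
    funext i
    simp only [Function.comp, ← RCLike.ofReal_mul, Real.mul_self_sqrt (hA.eigenvalues_nonneg i)]
  calc hA.sqrt * hA.sqrt = U * (D * D) * star U := by
        simp only [PosSemidef.sqrt, U, D, Matrix.mul_assoc]
        rw [← Matrix.mul_assoc (star U), hUU, Matrix.one_mul]
    _ = A := by rw [hDD]; exact hA.1.spectral_theorem.symm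

lemma PosSemidef.sqrt_mul_mul_sqrt {A X : Matrix m m 𝕜} (hA : A.PosSemidef) (hX : X.PosSemidef) :
    (hA.sqrt * X * hA.sqrt).PosSemidef := by
  simpa only [hA.posSemidef_sqrt.1.eq] using hX.conjTranspose_mul_mul_same hA.sqrt

lemma PosDef.det_add_eq_det_mul_det_one_add {C : Matrix m m 𝕜} (hC : C.PosDef) (X : Matrix m m 𝕜) :
    (X + C).det = C.det * (1 + hC.inv.posSemidef.sqrt * X * hC.inv.posSemidef.sqrt).det := by
  set S := hC.inv.posSemidef.sqrt
  have hSS : S * S = C⁻¹ := hC.inv.posSemidef.sqrt_mul_self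
  have hCu : IsUnit C.det := hC.isUnit.map detMonoidHom
  have hSCS : S * C * S = 1 :=
    mul_eq_one_comm.mp (by rw [← Matrix.mul_assoc, hSS, nonsing_inv_mul _ hCu])
  have hCSS : C.det * (S.det * S.det) = 1 := by
    rw [← det_mul, hSS, ← det_mul, mul_nonsing_inv _ hCu, det_one]
  calc (X + C).det = C.det * (S.det * S.det) * (X + C).det := by rw [hCSS, one_mul]
    _ = C.det * (S * (X + C) * S).det := by simp only [det_mul]; ring
    _ = C.det * (1 + S * X * S).det := by rw [mul_add, add_mul, hSCS, add_comm]

lemma IsHermitian.det_one_add {M : Matrix m m 𝕜} (hM : M.IsHermitian) :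
    (1 + M).det = ∏ i, (1 + (hM.eigenvalues i : 𝕜)) := by
  set U : Matrix m m 𝕜 := hM.eigenvectorUnitary.1
  have hUU : U * star U = 1 := (mem_unitaryGroup_iff).mp hM.eigenvectorUnitary.2
  have hconj : 1 + M = U * (1 + diagonal (RCLike.ofReal ∘ hM.eigenvalues)) * star U := by
    rw [mul_add, mul_one, add_mul, hUU]
    exact congrArg (1 + ·) hM.spectral_theorem
  rw [hconj, det_mul_right_comm, hUU, one_mul, ← diagonal_one, diagonal_add, det_diagonal]
  simp

end Matrix

section esymm

variable {n : ℕ}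

lemma esymm_zero (x : Fin n → ℝ) : esymm n 0 x = 1 := by simp [esymm]

lemma esymm_self (x : Fin n → ℝ) : esymm n n x = ∏ i, x i := by
  have hself : powersetCard n (univ : Finset (Fin n)) = {univ} := by
    simpa using powersetCard_self (univ : Finset (Fin n))
  rw [esymm, hself, sum_singleton]

lemma prod_one_add_eq_sum_esymm (x : Fin n → ℝ) :
    ∏ i, (1 + x i) = ∑ k ∈ range (n + 1), esymm n k x := by
  rw [prod_one_add, sum_powerset]
  simp [esymm, card_univ]

lemma prod_one_add_le_of_esymm_le {x y : Fin n → ℝ}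
    (hle : ∀ k, 1 ≤ k → k ≤ n - 1 → esymm n k x ≤ esymm n k y)
    (hprod : ∏ i, x i = ∏ i, y i) :
    ∏ i, (1 + x i) ≤ ∏ i, (1 + y i) := by
  rw [prod_one_add_eq_sum_esymm, prod_one_add_eq_sum_esymm]
  refine sum_le_sum fun k hk => ?_
  rcases Nat.eq_zero_or_pos k with rfl | hk0
  · rw [esymm_zero, esymm_zero]
  rcases eq_or_ne k n with rfl | hkn
  · rw [esymm_self, esymm_self, hprod]
  exact hle k hk0 (by rw [mem_range] at hk; omega)

end esymm

lemma re_det_half_smul_add {n : ℕ} {C : Matrix (Fin n) (Fin n) ℂ} (hC : C.PosDef)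
    {X : Matrix (Fin n) (Fin n) ℂ}
    (hH : (hC.inv.posSemidef.sqrt * X * hC.inv.posSemidef.sqrt).IsHermitian) :
    (((1 / 2 : ℂ) • (X + C)).det).re =
      (1 / 2) ^ n * (∏ i, hC.1.eigenvalues i) * ∏ i, (1 + hH.eigenvalues i) := by
  rw [det_smul, hC.det_add_eq_det_mul_det_one_add, hH.det_one_add,
    hC.1.det_eq_prod_eigenvalues, Fintype.card_fin]
  convert Complex.ofReal_re _ using 2
  push_cast
  exact (mul_assoc _ _ _).symm

theorem stmt_14_general (n : ℕ) (A B C : Matrix (Fin n) (Fin n) ℂ)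
    (hA : A.PosDef) (hC : C.PosDef)
    (hHA : ((hC.inv.posSemidef.sqrt) * A * (hC.inv.posSemidef.sqrt)).IsHermitian)
    (hHB : ((hC.inv.posSemidef.sqrt) * B * (hC.inv.posSemidef.sqrt)).IsHermitian)
    (hE : ∀ k, 1 ≤ k → k ≤ n - 1 →
      esymm n k hHA.eigenvalues ≤ esymm n k hHB.eigenvalues)
    (hdet : (A * C⁻¹).det = (B * C⁻¹).det) :
    deltaS n A C ≤ deltaS n B C := by
  have hAB : A.det = B.det := by
    simpa only [det_mul, mul_left_inj' hC.inv.det_pos.ne'] using hdet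
  have hprod : ∏ i, hHA.eigenvalues i = ∏ i, hHB.eigenvalues i := by
    have h := hHA.det_eq_prod_eigenvalues
    rw [det_mul, det_mul, hAB, ← det_mul, ← det_mul, hHB.det_eq_prod_eigenvalues] at h
    exact_mod_cast h.symm
  have hpos : 0 < ∏ i, (1 + hHA.eigenvalues i) := prod_pos fun i _ => by
    linarith [(hC.inv.posSemidef.sqrt_mul_mul_sqrt hA.posSemidef).eigenvalues_nonneg i]
  have hCpos : 0 < ∏ i, hC.1.eigenvalues i := prod_pos fun i _ => hC.eigenvalues_pos i
  rw [deltaS, deltaS, det_mul A C, det_mul B C, hAB, re_det_half_smul_add hC hHA,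
    re_det_half_smul_add hC hHB]
  gcongr ?_ - _
  exact Real.log_le_log (by positivity) <|
    mul_le_mul_of_nonneg_left (prod_one_add_le_of_esymm_le hE hprod) (by positivity)

theorem stmt_14 (n : ℕ) (A B C : Matrix (Fin n) (Fin n) ℂ)
    (hA : A.PosDef) (hB : B.PosDef) (hC : C.PosDef)
    (hHA : ((hC.inv.posSemidef.sqrt) * A * (hC.inv.posSemidef.sqrt)).IsHermitian)
    (hHB : ((hC.inv.posSemidef.sqrt) * B * (hC.inv.posSemidef.sqrt)).IsHermitian)
    (hE : ∀ k, 1 ≤ k → k ≤ n - 1 →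
      esymm n k hHA.eigenvalues ≤ esymm n k hHB.eigenvalues)
    (hdet : (A * C⁻¹).det = (B * C⁻¹).det) :
    deltaS n A C ≤ deltaS n B C :=
  stmt_14_general n A B C hA hC hHA hHB hE hdet
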